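/- Let (ρ,η) ∈ X with ρ, η bounded, and suppose there exist disjoint measurable sets B₁ ⊂ supp(ρ), B₂ ⊂ supp(η), B₃ ⊂ Ω∖(supp(ρ)∪supp(η)) of equal positive measure and α > 0 with ρ > α a.e. on B₁ and η > α a.e. on B₂. Define ρᵋ = ρ − ε1_{B₁} + ε1_{B₃}, ηᵋ = η − ε1_{B₂} + ε1_{B₃} for 0 < ε < α. Then with F(ρ,η) = (1/2)∫_Ω(ρ+η)² dx: F(ρᵋ,ηᵋ) = F(ρ,η) − ε(∫_{B₁}(ρ+η) dx + ∫_{B₂}(ρ+η) dx) + 3ε²|B₃|, and for ε small enough F(ρᵋ,ηᵋ) < F(ρ,η). Consequently any minimiser of F over X satisfies supp(ρ) ∪ supp(η) = Ω up to a null set. -/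

import Mathlib

open MeasureTheory

/-- The symmetric (δ = 0) local energy `F(ρ,η) = (1/2)∫_Ω (ρ+η)²`. -/
noncomputable def F0 (Ω : Set ℝ) (ρ η : ℝ → ℝ) : ℝ :=
  (1/2) * ∫ x in Ω, (ρ x + η x)^2

/-- The admissible set X: nonnegative L² densities with prescribed masses. -/
def InX (Ω : Set ℝ) (m₁ m₂ : ℝ) (ρ η : ℝ → ℝ) : Prop :=
  MemLp ρ 2 (volume.restrict Ω) ∧ MemLp η 2 (volume.restrict Ω) ∧
  (∀ᵐ x ∂(volume.restrict Ω), 0 ≤ ρ x) ∧ (∀ᵐ x ∂(volume.restrict Ω), 0 ≤ η x) ∧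
  (∫ x in Ω, ρ x) = m₁ ∧ (∫ x in Ω, η x) = m₂

/-!
Write `s = ρ + η`. Moving mass `ε` of `ρ` from `B₁` and of `η` from `B₂` into the vacuum `B₃`
turns `s` into `s + ε g` with `g = 2·1_{B₃} - 1_{B₁} - 1_{B₂}`. As `s = 0` on `B₃` and the sets
are disjoint of equal measure, `∫ s g = -∫_{B₁} s - ∫_{B₂} s` and `∫ g² = 6|B₃|`, which is the
energy identity. Since `s ≥ α` on `B₁ ∪ B₂`, the linear term is at most `-2εα|B₃|`, so the energy
drops as soon as `3ε < 2α`.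

If a minimiser `(σ, τ)` had a vacuum of positive measure, the positive masses would give
superlevel sets `{σ > c}`, `{τ > c}` of positive measure. The intermediate value theorem for
`t ↦ |S ∩ (-∞, t)|` carves out of these and of the vacuum three disjoint sets of equal positive
measure; the move above, with `ε = c / 2`, stays admissible and lowers the energy.
-/

open MeasureTheory Set
open scoped ENNReal

noncomputable def moveMass {X : Type*} (ε : ℝ) (B B' : Set X) (ρ : X → ℝ) (x : X) : ℝ :=
  ρ x - ε * B.indicator 1 x + ε * B'.indicator 1 x

/-- The change of `ρ + η` per unit of mass moved into `B₃`, out of `B₁` for `ρ` and out of `B₂`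
for `η`. -/
noncomputable def vacuumShift {X : Type*} (B₁ B₂ B₃ : Set X) (x : X) : ℝ :=
  2 * B₃.indicator 1 x - B₁.indicator 1 x - B₂.indicator 1 x

theorem vacuumShift_sq {X : Type*} {B₁ B₂ B₃ : Set X} (hd₁₂ : Disjoint B₁ B₂)
    (hd₁₃ : Disjoint B₁ B₃) (hd₂₃ : Disjoint B₂ B₃) (x : X) :
    vacuumShift B₁ B₂ B₃ x ^ 2
      = B₁.indicator 1 x + B₂.indicator 1 x + 4 * B₃.indicator 1 x := by
  by_cases h₁ : x ∈ B₁
  · simp [vacuumShift, h₁, disjoint_left.1 hd₁₂ h₁, disjoint_left.1 hd₁₃ h₁]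
  by_cases h₂ : x ∈ B₂
  · simp [vacuumShift, h₁, h₂, disjoint_left.1 hd₂₃ h₂]
  by_cases h₃ : x ∈ B₃ <;> norm_num [vacuumShift, h₁, h₂, h₃]

section MassTransfer

variable {X : Type*} [MeasurableSpace X] {μ : Measure X} {ρ η : X → ℝ} {B B' B₁ B₂ B₃ : Set X}

theorem integral_add_mul_sq {f g : X → ℝ} (hf : MemLp f 2 μ) (hg : MemLp g 2 μ) (ε : ℝ) :
    ∫ x, (f x + ε * g x) ^ 2 ∂μ
      = ∫ x, f x ^ 2 ∂μ + 2 * ε * ∫ x, f x * g x ∂μ + ε ^ 2 * ∫ x, g x ^ 2 ∂μ := by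
  have hfg : Integrable (fun x => f x * g x) μ := hf.integrable_mul hg
  calc ∫ x, (f x + ε * g x) ^ 2 ∂μ
      = ∫ x, (f x ^ 2 + 2 * ε * (f x * g x) + ε ^ 2 * g x ^ 2) ∂μ := by
        congr 1; ext x; ring
    _ = _ := by
        rw [integral_add (hf.integrable_sq.fun_add (hfg.const_mul _))
            (hg.integrable_sq.const_mul _), integral_add hf.integrable_sq (hfg.const_mul _),
          integral_const_mul, integral_const_mul]

theorem mul_measureReal_le_setIntegral_of_ae_le {f : X → ℝ} {s : Set X} {c : ℝ} (hs : μ s ≠ ∞)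
    (hf : IntegrableOn f s μ) (hc : ∀ᵐ x ∂μ.restrict s, c ≤ f x) :
    c * μ.real s ≤ ∫ x in s, f x ∂μ := by
  simpa [setIntegral_const, mul_comm] using integral_mono_ae (integrableOn_const (C := c) hs) hf hc

theorem exists_pos_measure_lt_of_integral_pos {f : X → ℝ} (hf0 : 0 ≤ᵐ[μ] f)
    (hfi : Integrable f μ) (hpos : 0 < ∫ x, f x ∂μ) :
    ∃ c > 0, μ {x | c < f x} ≠ 0 := by
  have hsupp : μ (Function.support f) ≠ 0 :=
    ((integral_pos_iff_support_of_nonneg_ae hf0 hfi).1 hpos).ne'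
  have hsub : Function.support f ≤ᵐ[μ] ⋃ n : ℕ, {x | 1 / ((n : ℝ) + 1) < f x} := by
    filter_upwards [hf0] with x hx hxs
    obtain ⟨n, hn⟩ := exists_nat_one_div_lt (lt_of_le_of_ne hx (Ne.symm hxs))
    exact mem_iUnion.2 ⟨n, hn⟩
  by_contra! h
  exact hsupp (measure_mono_null_ae hsub (measure_iUnion_null fun n => h _ Nat.one_div_pos_of_nat))

theorem memLp_vacuumShift [IsFiniteMeasure μ] (hB₁ : MeasurableSet B₁) (hB₂ : MeasurableSet B₂)
    (hB₃ : MeasurableSet B₃) (p : ℝ≥0∞) :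
    MemLp (vacuumShift B₁ B₂ B₃) p μ := by
  have h : ∀ {B : Set X}, MeasurableSet B → MemLp (B.indicator (1 : X → ℝ)) p μ :=
    fun hB => memLp_indicator_const p hB 1 (Or.inr (measure_ne_top μ _))
  exact (((h hB₃).const_mul 2).sub (h hB₁)).sub (h hB₂)

theorem integral_mul_vacuumShift {s : X → ℝ} (hs : Integrable s μ)
    (hB₁ : MeasurableSet B₁) (hB₂ : MeasurableSet B₂) (hB₃ : MeasurableSet B₃)
    (hvac : ∀ᵐ x ∂μ.restrict B₃, s x = 0) :
    ∫ x, s x * vacuumShift B₁ B₂ B₃ x ∂μ = -(∫ x in B₁, s x ∂μ + ∫ x in B₂, s x ∂μ) := by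
  have hind : ∀ (B : Set X) (x : X), s x * B.indicator 1 x = B.indicator s x := fun B x => by
    by_cases hx : x ∈ B <;> simp [hx]
  simp only [vacuumShift, mul_sub, mul_left_comm _ (2 : ℝ), hind]
  have h₃₁ : Integrable (fun x => 2 * B₃.indicator s x - B₁.indicator s x) μ :=
    ((hs.indicator hB₃).const_mul 2).sub (hs.indicator hB₁)
  rw [integral_sub h₃₁ (hs.indicator hB₂),
    integral_sub ((hs.indicator hB₃).const_mul 2) (hs.indicator hB₁), integral_const_mul,
    integral_indicator hB₁, integral_indicator hB₂, integral_indicator hB₃,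
    integral_eq_zero_of_ae hvac]
  ring

theorem integral_vacuumShift_sq [IsFiniteMeasure μ] (hB₁ : MeasurableSet B₁)
    (hB₂ : MeasurableSet B₂) (hB₃ : MeasurableSet B₃) (hd₁₂ : Disjoint B₁ B₂)
    (hd₁₃ : Disjoint B₁ B₃) (hd₂₃ : Disjoint B₂ B₃) :
    ∫ x, vacuumShift B₁ B₂ B₃ x ^ 2 ∂μ = μ.real B₁ + μ.real B₂ + 4 * μ.real B₃ := by
  have h : ∀ {B : Set X}, MeasurableSet B → Integrable (B.indicator (1 : X → ℝ)) μ :=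
    fun hB => (integrable_const 1).indicator hB
  simp only [vacuumShift_sq hd₁₂ hd₁₃ hd₂₃]
  rw [integral_add ((h hB₁).fun_add (h hB₂)) ((h hB₃).const_mul 4), integral_add (h hB₁) (h hB₂),
    integral_const_mul, integral_indicator_one hB₁, integral_indicator_one hB₂,
    integral_indicator_one hB₃]

theorem integral_sq_moveMass [IsFiniteMeasure μ] (hρ : MemLp ρ 2 μ) (hη : MemLp η 2 μ)
    (hB₁ : MeasurableSet B₁) (hB₂ : MeasurableSet B₂) (hB₃ : MeasurableSet B₃)
    (hd₁₂ : Disjoint B₁ B₂) (hd₁₃ : Disjoint B₁ B₃) (hd₂₃ : Disjoint B₂ B₃)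
    (hvac : ∀ᵐ x ∂μ.restrict B₃, ρ x = 0 ∧ η x = 0) (ε : ℝ) :
    ∫ x, (moveMass ε B₁ B₃ ρ x + moveMass ε B₂ B₃ η x) ^ 2 ∂μ
      = ∫ x, (ρ x + η x) ^ 2 ∂μ - 2 * ε * (∫ x in B₁, (ρ x + η x) ∂μ + ∫ x in B₂, (ρ x + η x) ∂μ)
        + ε ^ 2 * (μ.real B₁ + μ.real B₂ + 4 * μ.real B₃) := by
  have hsum : ∀ x, moveMass ε B₁ B₃ ρ x + moveMass ε B₂ B₃ η x
      = (ρ x + η x) + ε * vacuumShift B₁ B₂ B₃ x := fun x => by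
    simp only [moveMass, vacuumShift]; ring
  have hvac' : ∀ᵐ x ∂μ.restrict B₃, ρ x + η x = 0 := by
    filter_upwards [hvac] with x hx
    rw [hx.1, hx.2, add_zero]
  have hs : MemLp (fun x => ρ x + η x) 2 μ := hρ.add hη
  simp only [hsum]
  rw [integral_add_mul_sq hs (memLp_vacuumShift hB₁ hB₂ hB₃ 2),
    integral_mul_vacuumShift (hs.integrable one_le_two) hB₁ hB₂ hB₃ hvac',
    integral_vacuumShift_sq hB₁ hB₂ hB₃ hd₁₂ hd₁₃ hd₂₃]
  ring

theorem memLp_moveMass [IsFiniteMeasure μ] {ε : ℝ} {p : ℝ≥0∞} (hρ : MemLp ρ p μ)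
    (hB : MeasurableSet B) (hB' : MeasurableSet B') : MemLp (moveMass ε B B' ρ) p μ := by
  have h : ∀ {C : Set X}, MeasurableSet C → MemLp (C.indicator (1 : X → ℝ)) p μ :=
    fun hC => memLp_indicator_const p hC 1 (Or.inr (measure_ne_top μ _))
  exact (hρ.sub ((h hB).const_mul ε)).add ((h hB').const_mul ε)

theorem integral_moveMass [IsFiniteMeasure μ] {ε : ℝ} (hρ : Integrable ρ μ)
    (hB : MeasurableSet B) (hB' : MeasurableSet B') (hm : μ B = μ B') :
    ∫ x, moveMass ε B B' ρ x ∂μ = ∫ x, ρ x ∂μ := by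
  have h : ∀ {C : Set X}, MeasurableSet C → Integrable (fun x => ε * C.indicator 1 x) μ :=
    fun hC => ((integrable_const 1).indicator hC).const_mul ε
  have hρB : Integrable (fun x => ρ x - ε * B.indicator 1 x) μ := hρ.sub (h hB)
  simp only [moveMass]
  rw [integral_add hρB (h hB'), integral_sub hρ (h hB), integral_const_mul, integral_const_mul,
    integral_indicator_one hB, integral_indicator_one hB', measureReal_def, measureReal_def, hm]
  ring

theorem ae_nonneg_moveMass {ε : ℝ} (hB : MeasurableSet B)
    (hε : 0 ≤ ε) (hρ0 : ∀ᵐ x ∂μ, 0 ≤ ρ x) (hρB : ∀ᵐ x ∂μ.restrict B, ε ≤ ρ x) :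
    ∀ᵐ x ∂μ, 0 ≤ moveMass ε B B' ρ x := by
  filter_upwards [hρ0, (ae_restrict_iff' hB).1 hρB] with x hx₀ hxB
  have hgain : 0 ≤ ε * B'.indicator 1 x :=
    mul_nonneg hε (indicator_nonneg (fun _ _ => zero_le_one) x)
  by_cases hx : x ∈ B
  · simp only [moveMass, indicator_of_mem hx, Pi.one_apply]
    linarith [hxB hx]
  · simp only [moveMass, indicator_of_notMem hx]
    linarith

end MassTransfer

section Energy

variable {Ω B₁ B₂ B₃ : Set ℝ} {ρ η : ℝ → ℝ}

theorem inX_moveMass {m₁ m₂ ε : ℝ} (hX : InX Ω m₁ m₂ ρ η) (hΩ : volume Ω ≠ ∞)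
    (hB₁ : MeasurableSet B₁) (hB₂ : MeasurableSet B₂) (hB₃ : MeasurableSet B₃)
    (hB₁Ω : B₁ ⊆ Ω) (hB₂Ω : B₂ ⊆ Ω) (hB₃Ω : B₃ ⊆ Ω)
    (hm12 : volume B₁ = volume B₂) (hm13 : volume B₁ = volume B₃) (hε : 0 ≤ ε)
    (hρB₁ : ∀ᵐ x ∂volume.restrict B₁, ε ≤ ρ x) (hηB₂ : ∀ᵐ x ∂volume.restrict B₂, ε ≤ η x) :
    InX Ω m₁ m₂ (moveMass ε B₁ B₃ ρ) (moveMass ε B₂ B₃ η) := by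
  obtain ⟨hρ, hη, hρ0, hη0, hρm, hηm⟩ := hX
  have := isFiniteMeasure_restrict.2 hΩ
  have hvol : ∀ {B}, B ⊆ Ω → volume.restrict Ω B = volume B := Measure.restrict_eq_self _
  refine ⟨memLp_moveMass hρ hB₁ hB₃, memLp_moveMass hη hB₂ hB₃,
    ae_nonneg_moveMass hB₁ hε hρ0 ?_, ae_nonneg_moveMass hB₂ hε hη0 ?_, ?_, ?_⟩
  · rwa [Measure.restrict_restrict_of_subset hB₁Ω]
  · rwa [Measure.restrict_restrict_of_subset hB₂Ω]
  · rwa [integral_moveMass (hρ.integrable one_le_two) hB₁ hB₃ (by rw [hvol hB₁Ω, hvol hB₃Ω, hm13])]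
  · rwa [integral_moveMass (hη.integrable one_le_two) hB₂ hB₃
      (by rw [hvol hB₂Ω, hvol hB₃Ω, ← hm12, hm13])]

theorem F0_moveMass (hΩ : volume Ω ≠ ∞)
    (hρ : MemLp ρ 2 (volume.restrict Ω)) (hη : MemLp η 2 (volume.restrict Ω))
    (hB₁ : MeasurableSet B₁) (hB₂ : MeasurableSet B₂) (hB₃ : MeasurableSet B₃)
    (hB₁Ω : B₁ ⊆ Ω) (hB₂Ω : B₂ ⊆ Ω) (hB₃Ω : B₃ ⊆ Ω)
    (hd₁₂ : Disjoint B₁ B₂) (hd₁₃ : Disjoint B₁ B₃) (hd₂₃ : Disjoint B₂ B₃)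
    (hm12 : volume B₁ = volume B₂) (hm13 : volume B₁ = volume B₃)
    (hvac : ∀ᵐ x ∂volume.restrict B₃, ρ x = 0 ∧ η x = 0) (ε : ℝ) :
    F0 Ω (moveMass ε B₁ B₃ ρ) (moveMass ε B₂ B₃ η)
      = F0 Ω ρ η - ε * ((∫ x in B₁, (ρ x + η x)) + ∫ x in B₂, (ρ x + η x))
        + 3 * ε ^ 2 * volume.real B₃ := by
  have := isFiniteMeasure_restrict.2 hΩ
  have hreal : ∀ {B}, B ⊆ Ω → (volume.restrict Ω).real B = volume.real B := fun hB => by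
    rw [measureReal_def, Measure.restrict_eq_self _ hB, measureReal_def]
  have h₁ : volume.real B₁ = volume.real B₃ := by rw [measureReal_def, hm13, measureReal_def]
  have h₂ : volume.real B₂ = volume.real B₃ := by
    rw [measureReal_def, ← hm12, hm13, measureReal_def]
  have key := integral_sq_moveMass hρ hη hB₁ hB₂ hB₃ hd₁₂ hd₁₃ hd₂₃
    (by rwa [Measure.restrict_restrict_of_subset hB₃Ω]) ε
  rw [Measure.restrict_restrict_of_subset hB₁Ω, Measure.restrict_restrict_of_subset hB₂Ω] at key
  unfold F0
  rw [key, hreal hB₁Ω, hreal hB₂Ω, hreal hB₃Ω, h₁, h₂]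
  ring

theorem F0_moveMass_lt {α ε : ℝ} (hΩ : volume Ω ≠ ∞)
    (hρ : MemLp ρ 2 (volume.restrict Ω)) (hη : MemLp η 2 (volume.restrict Ω))
    (hρ0 : ∀ᵐ x ∂volume.restrict Ω, 0 ≤ ρ x) (hη0 : ∀ᵐ x ∂volume.restrict Ω, 0 ≤ η x)
    (hB₁ : MeasurableSet B₁) (hB₂ : MeasurableSet B₂) (hB₃ : MeasurableSet B₃)
    (hB₁Ω : B₁ ⊆ Ω) (hB₂Ω : B₂ ⊆ Ω) (hB₃Ω : B₃ ⊆ Ω)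
    (hd₁₂ : Disjoint B₁ B₂) (hd₁₃ : Disjoint B₁ B₃) (hd₂₃ : Disjoint B₂ B₃)
    (hm12 : volume B₁ = volume B₂) (hm13 : volume B₁ = volume B₃) (hpos : 0 < volume B₁)
    (hρα : ∀ᵐ x ∂volume.restrict B₁, α < ρ x) (hηα : ∀ᵐ x ∂volume.restrict B₂, α < η x)
    (hvac : ∀ᵐ x ∂volume.restrict B₃, ρ x = 0 ∧ η x = 0) (hε : 0 < ε) (hεα : 3 * ε < 2 * α) :
    F0 Ω (moveMass ε B₁ B₃ ρ) (moveMass ε B₂ B₃ η) < F0 Ω ρ η := by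
  have := isFiniteMeasure_restrict.2 hΩ
  have hs : IntegrableOn (fun x => ρ x + η x) Ω := (hρ.add hη).integrable one_le_two
  have lower : ∀ {B}, B ⊆ Ω → volume B = volume B₃ →
      (∀ᵐ x ∂volume.restrict B, α ≤ ρ x + η x) → α * volume.real B₃ ≤ ∫ x in B, (ρ x + η x) :=
    fun hBΩ hB hα => by
      rw [measureReal_def, ← hB]
      exact mul_measureReal_le_setIntegral_of_ae_le (measure_ne_top_of_subset hBΩ hΩ)
        (hs.mono_set hBΩ) hα
  have h₁ := lower hB₁Ω hm13 (by
    filter_upwards [hρα, ae_restrict_of_ae_restrict_of_subset hB₁Ω hη0] with x h h'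
    linarith)
  have h₂ := lower hB₂Ω (hm12 ▸ hm13) (by
    filter_upwards [hηα, ae_restrict_of_ae_restrict_of_subset hB₂Ω hρ0] with x h h'
    linarith)
  have hm : 0 < volume.real B₃ :=
    ENNReal.toReal_pos (hm13 ▸ hpos.ne') (measure_ne_top_of_subset hB₃Ω hΩ)
  rw [F0_moveMass hΩ hρ hη hB₁ hB₂ hB₃ hB₁Ω hB₂Ω hB₃Ω hd₁₂ hd₁₃ hd₂₃ hm12 hm13 hvac]
  nlinarith [mul_pos hε hm]

theorem exists_inX_F0_lt_of_vacuum {m₁ m₂ α : ℝ} (hX : InX Ω m₁ m₂ ρ η) (hΩ : volume Ω ≠ ∞)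
    (hB₁ : MeasurableSet B₁) (hB₂ : MeasurableSet B₂) (hB₃ : MeasurableSet B₃)
    (hB₁Ω : B₁ ⊆ Ω) (hB₂Ω : B₂ ⊆ Ω) (hB₃Ω : B₃ ⊆ Ω)
    (hd₁₂ : Disjoint B₁ B₂) (hd₁₃ : Disjoint B₁ B₃) (hd₂₃ : Disjoint B₂ B₃)
    (hm12 : volume B₁ = volume B₂) (hm13 : volume B₁ = volume B₃) (hpos : 0 < volume B₁)
    (hα : 0 < α) (hρα : ∀ᵐ x ∂volume.restrict B₁, α < ρ x)
    (hηα : ∀ᵐ x ∂volume.restrict B₂, α < η x)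
    (hvac : ∀ᵐ x ∂volume.restrict B₃, ρ x = 0 ∧ η x = 0) :
    ∃ ρ' η', InX Ω m₁ m₂ ρ' η' ∧ F0 Ω ρ' η' < F0 Ω ρ η := by
  have hε : 0 < α / 2 := half_pos hα
  refine ⟨_, _, inX_moveMass hX hΩ hB₁ hB₂ hB₃ hB₁Ω hB₂Ω hB₃Ω hm12 hm13 hε.le ?_ ?_,
    F0_moveMass_lt hΩ hX.1 hX.2.1 hX.2.2.1 hX.2.2.2.1 hB₁ hB₂ hB₃ hB₁Ω hB₂Ω hB₃Ω hd₁₂ hd₁₃ hd₂₃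
      hm12 hm13 hpos hρα hηα hvac hε (by linarith)⟩
  · filter_upwards [hρα] with x hx
    linarith
  · filter_upwards [hηα] with x hx
    linarith

end Energy

theorem Real.exists_subset_volume_eq {S : Set ℝ} (hS : MeasurableSet S)
    (hSb : Bornology.IsBounded S) {r : ℝ≥0∞} (hr : r ≤ volume S) :
    ∃ T ⊆ S, MeasurableSet T ∧ volume T = r := by
  have hfin : ∀ t, volume (S ∩ Iio t) ≠ ∞ := fun t =>
    measure_ne_top_of_subset inter_subset_left hSb.measure_lt_top.ne
  set g : ℝ → ℝ := fun t => volume.real (S ∩ Iio t)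
  have hlip : LipschitzWith 1 g := LipschitzWith.of_le_add fun u t => by
    calc g u ≤ volume.real (S ∩ Iio t ∪ Ico t u) := by
          refine measureReal_mono (fun x ⟨hxS, hxu⟩ => ?_)
            (measure_union_ne_top (hfin t) (by simp [Real.volume_Ico]))
          rcases lt_or_ge x t with hxt | hxt
          exacts [Or.inl ⟨hxS, hxt⟩, Or.inr ⟨hxt, hxu⟩]
      _ ≤ g t + volume.real (Ico t u) := measureReal_union_le _ _
      _ ≤ g t + dist u t := by
          rw [Real.volume_real_Ico, Real.dist_eq]
          gcongr
          exact max_le (le_abs_self _) (abs_nonneg _)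
  have hbd := hSb.subset_Icc_sInf_sSup
  have hg₀ : g (sInf S) = 0 := by
    have : S ∩ Iio (sInf S) = ∅ := eq_empty_of_forall_notMem fun x ⟨hxS, hx⟩ =>
      (hbd hxS).1.not_gt hx
    simp [g, this]
  have hg₁ : g (sSup S + 1) = volume.real S := by
    have : S ∩ Iio (sSup S + 1) = S := inter_eq_left.2 fun x hxS =>
      lt_of_le_of_lt (hbd hxS).2 (lt_add_one _)
    simp [g, this]
  have hmem : r.toReal ∈ uIcc (g (sInf S)) (g (sSup S + 1)) := by
    rw [hg₀, hg₁, uIcc_of_le measureReal_nonneg]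
    exact ⟨ENNReal.toReal_nonneg, ENNReal.toReal_mono hSb.measure_lt_top.ne hr⟩
  obtain ⟨t, -, ht⟩ := intermediate_value_uIcc hlip.continuous.continuousOn hmem
  exact ⟨S ∩ Iio t, inter_subset_left, hS.inter measurableSet_Iio,
    (ENNReal.toReal_eq_toReal_iff' (hfin t) (ne_top_of_le_ne_top hSb.measure_lt_top.ne hr)).1 ht⟩

theorem Real.exists_disjoint_subsets_volume_eq {A₁ A₂ A₃ : Set ℝ} (hA₁ : MeasurableSet A₁)
    (hA₂ : MeasurableSet A₂) (hA₃ : MeasurableSet A₃) (hA₁b : Bornology.IsBounded A₁)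
    (hA₂b : Bornology.IsBounded A₂) (hA₃b : Bornology.IsBounded A₃) (hA₁0 : volume A₁ ≠ 0)
    (hA₂0 : volume A₂ ≠ 0) (hA₃0 : volume A₃ ≠ 0) :
    ∃ C₁ ⊆ A₁, ∃ C₂ ⊆ A₂, ∃ C₃ ⊆ A₃, MeasurableSet C₁ ∧ MeasurableSet C₂ ∧ MeasurableSet C₃ ∧
      Disjoint C₁ C₂ ∧ volume C₁ = volume C₂ ∧ volume C₁ = volume C₃ ∧ 0 < volume C₁ := by
  set t := min (min (volume A₁) (volume A₂)) (volume A₃)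
  have ht0 : t ≠ 0 := by simp [t, hA₁0, hA₂0, hA₃0]
  have htop : t / 2 ≠ ∞ :=
    ne_top_of_le_ne_top hA₃b.measure_lt_top.ne ((ENNReal.half_le_self).trans (min_le_right _ _))
  have ht₁ : t / 2 ≤ volume A₁ :=
    ENNReal.half_le_self.trans ((min_le_left _ _).trans (min_le_left _ _))
  have ht₂ : t / 2 + t / 2 ≤ volume A₂ := by
    rw [ENNReal.add_halves]; exact (min_le_left _ _).trans (min_le_right _ _)
  have ht₃ : t / 2 ≤ volume A₃ := ENNReal.half_le_self.trans (min_le_right _ _)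
  obtain ⟨C₁, hC₁, hC₁m, hC₁v⟩ := Real.exists_subset_volume_eq hA₁ hA₁b ht₁
  have ht₂' : t / 2 ≤ volume (A₂ \ C₁) := by
    calc t / 2 ≤ volume A₂ - volume C₁ := by
          rw [hC₁v]; exact ENNReal.le_sub_of_add_le_left htop ht₂
      _ ≤ volume (A₂ \ C₁) := le_measure_sdiff
  obtain ⟨C₂, hC₂, hC₂m, hC₂v⟩ :=
    Real.exists_subset_volume_eq (hA₂.diff hC₁m) (hA₂b.subset sdiff_subset) ht₂'
  obtain ⟨C₃, hC₃, hC₃m, hC₃v⟩ := Real.exists_subset_volume_eq hA₃ hA₃b ht₃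
  refine ⟨C₁, hC₁, C₂, hC₂.trans sdiff_subset, C₃, hC₃, hC₁m, hC₂m, hC₃m,
    disjoint_left.2 fun x hx₁ hx₂ => (hC₂ hx₂).2 hx₁, ?_, ?_, ?_⟩
  · rw [hC₁v, hC₂v]
  · rw [hC₁v, hC₃v]
  · rw [hC₁v]; exact ENNReal.half_pos ht0

section Minimizer

variable {Ω : Set ℝ} {m₁ m₂ : ℝ} {σ τ : ℝ → ℝ}

theorem volume_vacuum_eq_zero_of_isMinimizer_of_measurable (hΩ : MeasurableSet Ω)
    (hΩb : Bornology.IsBounded Ω) (hm₁ : 0 < m₁) (hm₂ : 0 < m₂) (hσ : Measurable σ)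
    (hτ : Measurable τ) (hX : InX Ω m₁ m₂ σ τ)
    (hmin : ∀ σ' τ', InX Ω m₁ m₂ σ' τ' → F0 Ω σ τ ≤ F0 Ω σ' τ') :
    volume {x ∈ Ω | σ x = 0 ∧ τ x = 0} = 0 := by
  by_contra hV
  have hfin : volume Ω ≠ ∞ := hΩb.measure_lt_top.ne
  have := isFiniteMeasure_restrict.2 hfin
  have ⟨hσ2, hτ2, hσ0, hτ0, hσm, hτm⟩ := hX
  obtain ⟨c₁, hc₁, hA₁⟩ :=
    exists_pos_measure_lt_of_integral_pos hσ0 (hσ2.integrable one_le_two) (hσm ▸ hm₁)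
  obtain ⟨c₂, hc₂, hA₂⟩ :=
    exists_pos_measure_lt_of_integral_pos hτ0 (hτ2.integrable one_le_two) (hτm ▸ hm₂)
  rw [Measure.restrict_apply' hΩ] at hA₁ hA₂
  set c := min c₁ c₂
  have hc : 0 < c := lt_min hc₁ hc₂
  have hA₁c : volume ({x | c < σ x} ∩ Ω) ≠ 0 := fun h => hA₁ (measure_mono_null
    (inter_subset_inter_left _ fun x (hx : c₁ < σ x) => (min_le_left _ _).trans_lt hx) h)
  have hA₂c : volume ({x | c < τ x} ∩ Ω) ≠ 0 := fun h => hA₂ (measure_mono_null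
    (inter_subset_inter_left _ fun x (hx : c₂ < τ x) => (min_le_right _ _).trans_lt hx) h)
  obtain ⟨C₁, hC₁, C₂, hC₂, C₃, hC₃, hC₁m, hC₂m, hC₃m, hd₁₂, hm12, hm13, hpos⟩ :=
    Real.exists_disjoint_subsets_volume_eq
      ((measurableSet_lt measurable_const hσ).inter hΩ)
      ((measurableSet_lt measurable_const hτ).inter hΩ)
      (hΩ.inter ((measurableSet_eq_fun hσ measurable_const).inter
        (measurableSet_eq_fun hτ measurable_const)))
      (hΩb.subset inter_subset_right) (hΩb.subset inter_subset_right)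
      (hΩb.subset fun x hx => hx.1) hA₁c hA₂c hV
  have hσC₁ : ∀ x ∈ C₁, c < σ x := fun x hx => (hC₁ hx).1
  have hτC₂ : ∀ x ∈ C₂, c < τ x := fun x hx => (hC₂ hx).1
  have hvac : ∀ x ∈ C₃, σ x = 0 ∧ τ x = 0 := fun x hx => (hC₃ hx).2
  have hC₁Ω : C₁ ⊆ Ω := fun x hx => (hC₁ hx).2
  have hC₂Ω : C₂ ⊆ Ω := fun x hx => (hC₂ hx).2
  have hC₃Ω : C₃ ⊆ Ω := fun x hx => (hC₃ hx).1
  have hd₁₃ : Disjoint C₁ C₃ :=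
    disjoint_left.2 fun x h₁ h₃ => by linarith [hσC₁ x h₁, (hvac x h₃).1]
  have hd₂₃ : Disjoint C₂ C₃ :=
    disjoint_left.2 fun x h₂ h₃ => by linarith [hτC₂ x h₂, (hvac x h₃).2]
  obtain ⟨σ', τ', hX', hlt⟩ := exists_inX_F0_lt_of_vacuum hX hfin hC₁m hC₂m hC₃m hC₁Ω hC₂Ω hC₃Ω
    hd₁₂ hd₁₃ hd₂₃ hm12 hm13 hpos hc (ae_restrict_of_forall_mem hC₁m hσC₁)
    (ae_restrict_of_forall_mem hC₂m hτC₂) (ae_restrict_of_forall_mem hC₃m hvac)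
  exact (hmin σ' τ' hX').not_gt hlt

theorem InX.congr_ae {σ' τ' : ℝ → ℝ} (hX : InX Ω m₁ m₂ σ τ)
    (hσ : σ =ᵐ[volume.restrict Ω] σ') (hτ : τ =ᵐ[volume.restrict Ω] τ') :
    InX Ω m₁ m₂ σ' τ' := by
  obtain ⟨hσ2, hτ2, hσ0, hτ0, hσm, hτm⟩ := hX
  refine ⟨hσ2.ae_eq hσ, hτ2.ae_eq hτ, ?_, ?_, (integral_congr_ae hσ).symm.trans hσm,
    (integral_congr_ae hτ).symm.trans hτm⟩
  · filter_upwards [hσ0, hσ] with x h₀ h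
    rwa [← h]
  · filter_upwards [hτ0, hτ] with x h₀ h
    rwa [← h]

theorem F0_congr_ae {σ' τ' : ℝ → ℝ} (hσ : σ =ᵐ[volume.restrict Ω] σ')
    (hτ : τ =ᵐ[volume.restrict Ω] τ') : F0 Ω σ τ = F0 Ω σ' τ' := by
  unfold F0
  congr 1
  refine integral_congr_ae ?_
  filter_upwards [hσ, hτ] with x h₁ h₂
  rw [h₁, h₂]

theorem volume_vacuum_congr_ae {σ' τ' : ℝ → ℝ} (hΩ : MeasurableSet Ω)
    (hσ : σ =ᵐ[volume.restrict Ω] σ') (hτ : τ =ᵐ[volume.restrict Ω] τ') :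
    volume {x ∈ Ω | σ x = 0 ∧ τ x = 0} = volume {x ∈ Ω | σ' x = 0 ∧ τ' x = 0} := by
  refine measure_congr (Filter.eventuallyEq_set.2 ?_)
  filter_upwards [(ae_restrict_iff' hΩ).1 hσ, (ae_restrict_iff' hΩ).1 hτ] with x h₁ h₂
  by_cases hx : x ∈ Ω
  · simp [hx, h₁ hx, h₂ hx]
  · simp [hx]

theorem volume_vacuum_eq_zero_of_isMinimizer (hΩ : MeasurableSet Ω)
    (hΩb : Bornology.IsBounded Ω) (hm₁ : 0 < m₁) (hm₂ : 0 < m₂) (hX : InX Ω m₁ m₂ σ τ)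
    (hmin : ∀ σ' τ', InX Ω m₁ m₂ σ' τ' → F0 Ω σ τ ≤ F0 Ω σ' τ') :
    volume {x ∈ Ω | σ x = 0 ∧ τ x = 0} = 0 := by
  have hσ := hX.1.aestronglyMeasurable.aemeasurable
  have hτ := hX.2.1.aestronglyMeasurable.aemeasurable
  rw [volume_vacuum_congr_ae hΩ hσ.ae_eq_mk hτ.ae_eq_mk]
  refine volume_vacuum_eq_zero_of_isMinimizer_of_measurable hΩ hΩb hm₁ hm₂ hσ.measurable_mk
    hτ.measurable_mk (hX.congr_ae hσ.ae_eq_mk hτ.ae_eq_mk) fun σ' τ' h => ?_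
  rw [← F0_congr_ae hσ.ae_eq_mk hτ.ae_eq_mk]
  exact hmin σ' τ' h

end Minimizer

theorem stmt19_general (a b m₁ m₂ α : ℝ) (hm₁ : 0 < m₁) (hm₂ : 0 < m₂)
    (hα : 0 < α) (B₁ B₂ B₃ : Set ℝ)
    (hB₁ : MeasurableSet B₁) (hB₂ : MeasurableSet B₂) (hB₃ : MeasurableSet B₃)
    (hB₁Ω : B₁ ⊆ Set.Ioo a b) (hB₂Ω : B₂ ⊆ Set.Ioo a b) (hB₃Ω : B₃ ⊆ Set.Ioo a b)
    (hd₁₂ : Disjoint B₁ B₂) (hd₁₃ : Disjoint B₁ B₃) (hd₂₃ : Disjoint B₂ B₃)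
    (hm12 : volume B₁ = volume B₂) (hm13 : volume B₁ = volume B₃) (hpos : 0 < volume B₁)
    (ρ η : ℝ → ℝ) (hX : InX (Set.Ioo a b) m₁ m₂ ρ η)
    (hρα : ∀ᵐ x ∂(volume.restrict B₁), α < ρ x)
    (hηα : ∀ᵐ x ∂(volume.restrict B₂), α < η x)
    (hvac : ∀ᵐ x ∂(volume.restrict B₃), ρ x = 0 ∧ η x = 0) :
    (∀ ε : ℝ, ε ∈ Set.Ioo 0 α →
      F0 (Set.Ioo a b) (fun x => ρ x - ε * B₁.indicator 1 x + ε * B₃.indicator 1 x)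
          (fun x => η x - ε * B₂.indicator 1 x + ε * B₃.indicator 1 x)
        = F0 (Set.Ioo a b) ρ η
          - ε * ((∫ x in B₁, (ρ x + η x)) + ∫ x in B₂, (ρ x + η x))
          + 3 * ε^2 * (volume B₃).toReal) ∧
    (∃ ε₀ : ℝ, 0 < ε₀ ∧ ∀ ε : ℝ, ε ∈ Set.Ioo 0 ε₀ → ε < α →
      F0 (Set.Ioo a b) (fun x => ρ x - ε * B₁.indicator 1 x + ε * B₃.indicator 1 x)
          (fun x => η x - ε * B₂.indicator 1 x + ε * B₃.indicator 1 x)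
        < F0 (Set.Ioo a b) ρ η) ∧
    (∀ σ τ : ℝ → ℝ, InX (Set.Ioo a b) m₁ m₂ σ τ →
      (∀ σ' τ' : ℝ → ℝ, InX (Set.Ioo a b) m₁ m₂ σ' τ' →
        F0 (Set.Ioo a b) σ τ ≤ F0 (Set.Ioo a b) σ' τ') →
      volume {x ∈ Set.Ioo a b | σ x = 0 ∧ τ x = 0} = 0) := by
  have hΩ : volume (Ioo a b) ≠ ∞ := measure_Ioo_lt_top.ne
  obtain ⟨hρ, hη, hρ0, hη0, -, -⟩ := hX
  refine ⟨fun ε _ => ?_, ⟨2 * α / 3, by positivity, fun ε hε _ => ?_⟩, fun σ τ hστ hmin => ?_⟩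
  · exact F0_moveMass hΩ hρ hη hB₁ hB₂ hB₃ hB₁Ω hB₂Ω hB₃Ω hd₁₂ hd₁₃ hd₂₃ hm12 hm13 hvac ε
  · exact F0_moveMass_lt hΩ hρ hη hρ0 hη0 hB₁ hB₂ hB₃ hB₁Ω hB₂Ω hB₃Ω hd₁₂ hd₁₃ hd₂₃ hm12 hm13
      hpos hρα hηα hvac hε.1 (by linarith [hε.2])
  · exact volume_vacuum_eq_zero_of_isMinimizer measurableSet_Ioo (Metric.isBounded_Ioo a b)
      hm₁ hm₂ hστ hmin

/-- Moving mass into a vacuum region strictly decreases the δ = 0 energy: the stated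
identity holds, the energy strictly decreases for small ε, and consequently any
minimiser of F over X has no vacuum: supp(ρ) ∪ supp(η) = Ω up to a null set. -/
theorem stmt19 (a b m₁ m₂ Cb α : ℝ) (hab : a < b) (hm₁ : 0 < m₁) (hm₂ : 0 < m₂)
    (hα : 0 < α) (B₁ B₂ B₃ : Set ℝ)
    (hB₁ : MeasurableSet B₁) (hB₂ : MeasurableSet B₂) (hB₃ : MeasurableSet B₃)
    (hB₁Ω : B₁ ⊆ Set.Ioo a b) (hB₂Ω : B₂ ⊆ Set.Ioo a b) (hB₃Ω : B₃ ⊆ Set.Ioo a b)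
    (hd₁₂ : Disjoint B₁ B₂) (hd₁₃ : Disjoint B₁ B₃) (hd₂₃ : Disjoint B₂ B₃)
    (hm12 : volume B₁ = volume B₂) (hm13 : volume B₁ = volume B₃) (hpos : 0 < volume B₁)
    (ρ η : ℝ → ℝ) (hX : InX (Set.Ioo a b) m₁ m₂ ρ η)
    (hbd : ∀ᵐ x ∂(volume.restrict (Set.Ioo a b)), ρ x ≤ Cb ∧ η x ≤ Cb)
    (hρα : ∀ᵐ x ∂(volume.restrict B₁), α < ρ x)
    (hηα : ∀ᵐ x ∂(volume.restrict B₂), α < η x)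
    (hvac : ∀ᵐ x ∂(volume.restrict B₃), ρ x = 0 ∧ η x = 0) :
    (∀ ε : ℝ, ε ∈ Set.Ioo 0 α →
      F0 (Set.Ioo a b) (fun x => ρ x - ε * B₁.indicator 1 x + ε * B₃.indicator 1 x)
          (fun x => η x - ε * B₂.indicator 1 x + ε * B₃.indicator 1 x)
        = F0 (Set.Ioo a b) ρ η
          - ε * ((∫ x in B₁, (ρ x + η x)) + ∫ x in B₂, (ρ x + η x))
          + 3 * ε^2 * (volume B₃).toReal) ∧
    (∃ ε₀ : ℝ, 0 < ε₀ ∧ ∀ ε : ℝ, ε ∈ Set.Ioo 0 ε₀ → ε < α →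
      F0 (Set.Ioo a b) (fun x => ρ x - ε * B₁.indicator 1 x + ε * B₃.indicator 1 x)
          (fun x => η x - ε * B₂.indicator 1 x + ε * B₃.indicator 1 x)
        < F0 (Set.Ioo a b) ρ η) ∧
    (∀ σ τ : ℝ → ℝ, InX (Set.Ioo a b) m₁ m₂ σ τ →
      (∀ σ' τ' : ℝ → ℝ, InX (Set.Ioo a b) m₁ m₂ σ' τ' →
        F0 (Set.Ioo a b) σ τ ≤ F0 (Set.Ioo a b) σ' τ') →
      volume {x ∈ Set.Ioo a b | σ x = 0 ∧ τ x = 0} = 0) :=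
  stmt19_general a b m₁ m₂ α hm₁ hm₂ hα B₁ B₂ B₃ hB₁ hB₂ hB₃ hB₁Ω hB₂Ω hB₃Ω hd₁₂ hd₁₃ hd₂₃ hm12 hm13
    hpos ρ η hX hρα hηα hvac
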